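/- Soundness of the decomposition principle: for any relations B, R, I and pacing function abs-steps, if secure-refine-simpler B R I abs-steps holds then secure-refinement B R I holds. -/
import Mathlib


set_option linter.unusedVariables false

namespace Stmt2

/-- Assume–guarantee modes. -/
inductive Mode : Type
  | AsmNoW | AsmNoRW | GuarNoW | GuarNoRW
  deriving DecidableEq

/-- Security classifications. -/
inductive Sec : Type
  | High | Low
  deriving DecidableEq

variable {Val Var TpsA TpsC : Type}

abbrev Mem (Val Var : Type) := Var → Val
abbrev Mds (Var : Type) := Mode → Set Var
abbrev LConf (Tps Val Var : Type) := Tps × Mds Var × Mem Val Var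

def readable (mds : Mds Var) (x : Var) : Prop := x ∉ mds Mode.AsmNoRW

def writable (mds : Mds Var) (x : Var) : Prop :=
  x ∉ mds Mode.AsmNoW ∧ x ∉ mds Mode.AsmNoRW

/-- Low-equality of memories modulo a mode state. -/
def lowEqMds (dma : Mem Val Var → Var → Sec) (Cset : Set Var) (mds : Mds Var)
    (mem1 mem2 : Mem Val Var) : Prop :=
  ∀ x, (x ∈ Cset ∨ (dma mem1 x = Sec.Low ∧ readable mds x)) → mem1 x = mem2 x

/-- Closedness under globally consistent changes (for a relation on local
configurations of a single language, with thread-private state type Tps). -/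
def cgConsistent {Tps : Type} (dma : Mem Val Var → Var → Sec) (Cset : Set Var)
    (B : Set (LConf Tps Val Var × LConf Tps Val Var)) : Prop :=
  ∀ (tps1 tps2 : Tps) (mds : Mds Var) (mem1 mem2 : Mem Val Var),
    ((tps1, mds, mem1), (tps2, mds, mem2)) ∈ B →
    ∀ mem1' mem2' : Mem Val Var,
      (∀ x, (mem1 x ≠ mem1' x ∨ mem2 x ≠ mem2' x ∨ dma mem1 x ≠ dma mem1' x) →
        writable mds x) →
      lowEqMds dma Cset mds mem1' mem2' →
      ((tps1, mds, mem1'), (tps2, mds, mem2')) ∈ B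

/-- Strong low-bisimulation modulo modes. -/
def strongLowBisimMM {Tps : Type}
    (step : LConf Tps Val Var → LConf Tps Val Var → Prop)
    (dma : Mem Val Var → Var → Sec) (Cset : Set Var)
    (B : Set (LConf Tps Val Var × LConf Tps Val Var)) : Prop :=
  cgConsistent dma Cset B ∧
  (∀ p ∈ B, (p.2, p.1) ∈ B) ∧
  ∀ lc1 lc2, (lc1, lc2) ∈ B → lc1.2.1 = lc2.2.1 →
    lowEqMds dma Cset lc1.2.1 lc1.2.2 lc2.2.2 ∧
    ∀ lc1', step lc1 lc1' →
      ∃ lc2', step lc2 lc2' ∧ lc1'.2.1 = lc2'.2.1 ∧ (lc1', lc2') ∈ B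

/-- n-fold iteration of a step relation. -/
def nSteps {α : Type*} (step : α → α → Prop) : ℕ → α → α → Prop
  | 0, a, b => a = b
  | n + 1, a, b => ∃ c, step a c ∧ nSteps step n c b

/-- The refinement relation preserves modes and memory. -/
def preservesModesMem
    (R : Set (LConf TpsA Val Var × LConf TpsC Val Var)) : Prop :=
  ∀ lcA lcC, (lcA, lcC) ∈ R → lcA.2.1 = lcC.2.1 ∧ lcA.2.2 = lcC.2.2

/-- Closedness of refinements under changes by others. -/
def closedOthers (dma : Mem Val Var → Var → Sec)
    (R : Set (LConf TpsA Val Var × LConf TpsC Val Var)) : Prop :=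
  ∀ (tpsA : TpsA) (tpsC : TpsC) (mds : Mds Var) (mem mem' : Mem Val Var),
    ((tpsA, mds, mem), (tpsC, mds, mem)) ∈ R →
    (∀ x, (mem x ≠ mem' x ∨ dma mem x ≠ dma mem' x) → writable mds x) →
    ((tpsA, mds, mem'), (tpsC, mds, mem')) ∈ R

/-- The cube-shaped refinement and coupling-invariant preservation condition. -/
def couplingInvPres
    (stepA : LConf TpsA Val Var → LConf TpsA Val Var → Prop)
    (stepC : LConf TpsC Val Var → LConf TpsC Val Var → Prop)
    (B : Set (LConf TpsA Val Var × LConf TpsA Val Var))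
    (R : Set (LConf TpsA Val Var × LConf TpsC Val Var))
    (I : Set (LConf TpsC Val Var × LConf TpsC Val Var)) : Prop :=
  ∀ lc1A lc1C, (lc1A, lc1C) ∈ R →
    ∀ lc1C', stepC lc1C lc1C' →
      ∃ n lc1A', nSteps stepA n lc1A lc1A' ∧ (lc1A', lc1C') ∈ R ∧
        ∀ lc2A lc2C lc2A',
          (lc1A, lc2A) ∈ B → lc1A.2.1 = lc2A.2.1 →
          (lc2A, lc2C) ∈ R → (lc1C, lc2C) ∈ I → lc1C.2.1 = lc2C.2.1 →
          nSteps stepA n lc2A lc2A' → lc1A'.2.1 = lc2A'.2.1 →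
          ∃ lc2C', stepC lc2C lc2C' ∧ lc1C'.2.1 = lc2C'.2.1 ∧
            (lc2A', lc2C') ∈ R ∧ (lc1C', lc2C') ∈ I

/-- Requirements for confidentiality-preserving secure refinement. -/
def secureRefinement (dma : Mem Val Var → Var → Sec) (Cset : Set Var)
    (stepA : LConf TpsA Val Var → LConf TpsA Val Var → Prop)
    (stepC : LConf TpsC Val Var → LConf TpsC Val Var → Prop)
    (B : Set (LConf TpsA Val Var × LConf TpsA Val Var))
    (R : Set (LConf TpsA Val Var × LConf TpsC Val Var))
    (I : Set (LConf TpsC Val Var × LConf TpsC Val Var)) : Prop :=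
  preservesModesMem R ∧ closedOthers dma R ∧
  cgConsistent dma Cset I ∧ (∀ p ∈ I, (p.2, p.1) ∈ I) ∧
  couplingInvPres stepA stepC B R I

/-- A configuration stops if it has no evaluation step. -/
def stops {α : Type*} (step : α → α → Prop) (a : α) : Prop := ¬ ∃ b, step a b

/-- Security-focused side conditions of the decomposition principle. -/
def simplerRefinementSafe
    (stepC : LConf TpsC Val Var → LConf TpsC Val Var → Prop)
    (B : Set (LConf TpsA Val Var × LConf TpsA Val Var))
    (R : Set (LConf TpsA Val Var × LConf TpsC Val Var))
    (I : Set (LConf TpsC Val Var × LConf TpsC Val Var))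
    (absSteps : LConf TpsA Val Var → LConf TpsC Val Var → ℕ) : Prop :=
  ∀ lc1A lc2A lc1C lc2C,
    (lc1A, lc2A) ∈ B → lc1A.2.1 = lc2A.2.1 →
    (lc1A, lc1C) ∈ R → (lc2A, lc2C) ∈ R →
    (lc1C, lc2C) ∈ I → lc1C.2.1 = lc2C.2.1 →
    (stops stepC lc1C ↔ stops stepC lc2C) ∧
    absSteps lc1A lc1C = absSteps lc2A lc2C ∧
    ∀ lc1C' lc2C', stepC lc1C lc1C' → stepC lc2C lc2C' →
      (lc1C', lc2C') ∈ I ∧ lc1C'.2.1 = lc2C'.2.1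

/-- Decomposition principle for secure refinement. -/
def secureRefineSimpler (dma : Mem Val Var → Var → Sec) (Cset : Set Var)
    (stepA : LConf TpsA Val Var → LConf TpsA Val Var → Prop)
    (stepC : LConf TpsC Val Var → LConf TpsC Val Var → Prop)
    (B : Set (LConf TpsA Val Var × LConf TpsA Val Var))
    (R : Set (LConf TpsA Val Var × LConf TpsC Val Var))
    (I : Set (LConf TpsC Val Var × LConf TpsC Val Var))
    (absSteps : LConf TpsA Val Var → LConf TpsC Val Var → ℕ) : Prop :=
  preservesModesMem R ∧ closedOthers dma R ∧
  cgConsistent dma Cset I ∧ (∀ p ∈ I, (p.2, p.1) ∈ I) ∧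
  simplerRefinementSafe stepC B R I absSteps ∧
  ∀ lcA lcC, (lcA, lcC) ∈ R → ∀ lcC', stepC lcC lcC' →
    ∃ lcA', nSteps stepA (absSteps lcA lcC) lcA lcA' ∧ (lcA', lcC') ∈ R

theorem nSteps_det {α : Type*} {step : α → α → Prop}
    (hdet : ∀ a b c, step a b → step a c → b = c) :
    ∀ n a b c, nSteps step n a b → nSteps step n a c → b = c := by
  intro n
  induction n with
  | zero => intro a b c hb hc; exact hb ▸ hc
  | succ n ih =>
      intro a b c hb hc
      obtain ⟨d, hd, hdb⟩ := hb
      obtain ⟨e, he, hec⟩ := hc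
      cases hdet a d e hd he
      exact ih d b c hdb hec

/-- Soundness of the decomposition principle. -/
theorem secure_refine_simpler_sound
    [Finite Var]
    (dma : Mem Val Var → Var → Sec) (Cvars : Var → Set Var) (Cset : Set Var)
    (hCset : Cset = {x | ∃ y, x ∈ Cvars y})
    (hCLow : ∀ mem x, x ∈ Cset → dma mem x = Sec.Low)
    (stepA : LConf TpsA Val Var → LConf TpsA Val Var → Prop)
    (stepC : LConf TpsC Val Var → LConf TpsC Val Var → Prop)
    (hdetA : ∀ lc lc1 lc2, stepA lc lc1 → stepA lc lc2 → lc1 = lc2)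
    (hdetC : ∀ lc lc1 lc2, stepC lc lc1 → stepC lc lc2 → lc1 = lc2)
    (B : Set (LConf TpsA Val Var × LConf TpsA Val Var))
    (R : Set (LConf TpsA Val Var × LConf TpsC Val Var))
    (I : Set (LConf TpsC Val Var × LConf TpsC Val Var))
    (absSteps : LConf TpsA Val Var → LConf TpsC Val Var → ℕ)
    (h : secureRefineSimpler dma Cset stepA stepC B R I absSteps) :
    secureRefinement dma Cset stepA stepC B R I := by
  obtain ⟨hpres, hclosed, hcg, hsym, hsafe, hpace⟩ := h
  refine ⟨hpres, hclosed, hcg, hsym, ?_⟩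
  intro lc1A lc1C hR1 lc1C' hstep1
  obtain ⟨lc1A', hnA, hR1'⟩ := hpace lc1A lc1C hR1 lc1C' hstep1
  refine ⟨absSteps lc1A lc1C, lc1A', hnA, hR1', ?_⟩
  intro lc2A lc2C lc2A' hB hmdsA hR2 hI hmdsC hnA2 _
  obtain ⟨hstops, habs, hIpres⟩ :=
    hsafe lc1A lc2A lc1C lc2C hB hmdsA hR1 hR2 hI hmdsC
  have hns : ¬ stops stepC lc2C := by
    intro hs
    exact (hstops.mpr hs) ⟨lc1C', hstep1⟩
  obtain ⟨lc2C', hstep2⟩ := not_not.mp hns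
  obtain ⟨lc2A'', hnA2', hR2'⟩ := hpace lc2A lc2C hR2 lc2C' hstep2
  rw [← habs] at hnA2'
  cases nSteps_det hdetA _ _ _ _ hnA2 hnA2'
  obtain ⟨hI', hmds'⟩ := hIpres lc1C' lc2C' hstep1 hstep2
  exact ⟨lc2C', hstep2, hmds', hR2', hI'⟩

end Stmt2
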